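/- The function g(r) = 𝒦(r)/r is strictly decreasing on the interval (0, 1/√2]. -/
import Mathlib

open Set Filter

/-- Complete elliptic integral of the first kind. -/
noncomputable def ellK (r : ℝ) : ℝ :=
  ∫ θ in (0:ℝ)..(Real.pi / 2), (1 - r ^ 2 * Real.sin θ ^ 2) ^ (-(1/2) : ℝ)

/-- The Grötzsch modulus μ(r) = (π/2)·𝒦'(r)/𝒦(r). -/
noncomputable def mu (r : ℝ) : ℝ :=
  Real.pi / 2 * ellK (Real.sqrt (1 - r ^ 2)) / ellK r

lemma base_pos {r : ℝ} (hr : r ^ 2 < 1) (θ : ℝ) : 0 < 1 - r ^ 2 * Real.sin θ ^ 2 := by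
  nlinarith [Real.sin_sq_le_one θ, sq_nonneg r, sq_nonneg (Real.sin θ), sq_nonneg (r * Real.sin θ)]

lemma cont_integrand {r : ℝ} (hr : r ^ 2 < 1) :
    Continuous (fun θ : ℝ => (1 - r ^ 2 * Real.sin θ ^ 2) ^ (-(1/2) : ℝ)) := by
  apply Continuous.rpow_const
  · continuity
  · intro θ; left; exact (base_pos hr θ).ne'

theorem stmt_1 :
    StrictAntiOn (fun r : ℝ => ellK r / r) (Set.Ioc 0 (1 / Real.sqrt 2)) := by
  intro r hr s hs hrs
  obtain ⟨hr0, hr1⟩ := hr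
  obtain ⟨hs0, hs1⟩ := hs
  have hsq : s ^ 2 ≤ 1 / 2 := by
    have h1 : s * s ≤ (1 / Real.sqrt 2) * (1 / Real.sqrt 2) :=
      mul_le_mul hs1 hs1 hs0.le (by positivity)
    have h2 : Real.sqrt 2 * Real.sqrt 2 = 2 := Real.mul_self_sqrt (by norm_num)
    rw [div_mul_div_comm, h2] at h1
    nlinarith
  have hrsq : r ^ 2 < s ^ 2 := by nlinarith
  have hr2 : r ^ 2 < 1 := by nlinarith
  have hs2' : s ^ 2 < 1 := by nlinarith
  -- key integral inequality: r * ellK s < s * ellK r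
  have key : r * ellK s < s * ellK r := by
    have hle : ∀ θ : ℝ, θ ∈ Set.Ioc 0 (Real.pi / 2) →
        r * (1 - s ^ 2 * Real.sin θ ^ 2) ^ (-(1/2) : ℝ) ≤
        s * (1 - r ^ 2 * Real.sin θ ^ 2) ^ (-(1/2) : ℝ) := by
      intro θ _
      have hbr := base_pos hr2 θ
      have hbs := base_pos hs2' θ
      have hsin := Real.sin_sq_le_one θ
      have e1 : (1 - r ^ 2 * Real.sin θ ^ 2) ^ (-(1/2) : ℝ)
          = (Real.sqrt (1 - r ^ 2 * Real.sin θ ^ 2))⁻¹ := by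
        rw [Real.rpow_neg hbr.le, Real.sqrt_eq_rpow]
      have e2 : (1 - s ^ 2 * Real.sin θ ^ 2) ^ (-(1/2) : ℝ)
          = (Real.sqrt (1 - s ^ 2 * Real.sin θ ^ 2))⁻¹ := by
        rw [Real.rpow_neg hbs.le, Real.sqrt_eq_rpow]
      rw [e1, e2, ← div_eq_mul_inv, ← div_eq_mul_inv,
        div_le_div_iff₀ (Real.sqrt_pos.2 hbs) (Real.sqrt_pos.2 hbr)]
      have hkey : r ^ 2 * (1 - r ^ 2 * Real.sin θ ^ 2)
          ≤ s ^ 2 * (1 - s ^ 2 * Real.sin θ ^ 2) := by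
        nlinarith [sq_nonneg (Real.sin θ), sq_nonneg r, sq_nonneg s,
          mul_nonneg (sub_pos.2 hrsq).le (sq_nonneg (Real.sin θ))]
      calc r * Real.sqrt (1 - r ^ 2 * Real.sin θ ^ 2)
          = Real.sqrt (r ^ 2 * (1 - r ^ 2 * Real.sin θ ^ 2)) := by
            rw [Real.sqrt_mul (sq_nonneg r), Real.sqrt_sq hr0.le]
        _ ≤ Real.sqrt (s ^ 2 * (1 - s ^ 2 * Real.sin θ ^ 2)) := Real.sqrt_le_sqrt hkey
        _ = s * Real.sqrt (1 - s ^ 2 * Real.sin θ ^ 2) := by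
            rw [Real.sqrt_mul (sq_nonneg s), Real.sqrt_sq hs0.le]
    rw [ellK, ellK, ← intervalIntegral.integral_const_mul, ← intervalIntegral.integral_const_mul]
    apply intervalIntegral.integral_lt_integral_of_continuousOn_of_le_of_exists_lt
      (by positivity)
      ((continuous_const.mul (cont_integrand hs2')).continuousOn)
      ((continuous_const.mul (cont_integrand hr2)).continuousOn)
      hle
    refine ⟨0, ⟨le_refl 0, by positivity⟩, ?_⟩
    simpa [Real.sin_zero, Real.one_rpow] using hrs
  show ellK s / s < ellK r / r
  rw [div_lt_div_iff₀ hs0 hr0]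
  nlinarith [key]
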